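/- In an election with alliances, if c is a Condorcet winner, then c's alliance-aware maximin score exceeds n/2 while every opponent's alliance-aware maximin score is less than n/2; consequently both IW-Maximin and SW-Maximin elect the Condorcet winner. -/
import Mathlib


/-- `Pref v a b` is the number of voters preferring `a` to `b`. -/
def Pref {C : Type*} [Fintype C] {n : ℕ} (v : Fin n → C → ℕ) (a b : C) : ℕ :=
  (Finset.univ.filter (fun i => v i a < v i b)).card

/-- Standard maximin score of `x` on candidate set `Cs`: the minimum over the
other candidates `y` of `Pref x y`. -/
noncomputable def maximinScore {C : Type*} [Fintype C] [DecidableEq C] {n : ℕ}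
    (Cs : Finset C) (v : Fin n → C → ℕ) (x : C) : ℕ∞ :=
  (Cs.erase x).inf (fun y => (Pref v x y : ℕ∞))

/-- Alliance-aware maximin score of `x`: the minimum over the opponents `x'` of
`x` (candidates of `Cs` outside `A x`) of `Pref x x'`. -/
noncomputable def aaMaximinScore {C : Type*} [Fintype C] [DecidableEq C] {n : ℕ}
    (Cs : Finset C) (A : C → Finset C) (v : Fin n → C → ℕ) (x : C) : ℕ∞ :=
  ((Cs \ A x).inf (fun y => (Pref v x y : ℕ∞)))

/-- `x` maximizes `g` on `s`, and is minimal w.r.t. the fixed tie-breaking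
linear order among the maximizers. -/
def IsBest {C : Type*} [LinearOrder C] {β : Type*} [LinearOrder β]
    (s : Finset C) (g : C → β) (x : C) : Prop :=
  x ∈ s ∧ (∀ y ∈ s, g y ≤ g x) ∧ ∀ y ∈ s, g y = g x → x ≤ y

/-- `w` is the IW-Maximin winner: first select the alliance of the candidate
with maximal alliance-aware maximin score; then elect, within that alliance,
the candidate with maximal standard maximin score. -/
def IWMaximinWinner {C : Type*} [Fintype C] [LinearOrder C] {n : ℕ}
    (Cs : Finset C) (A : C → Finset C) (v : Fin n → C → ℕ) (w : C) : Prop :=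
  ∃ t, IsBest Cs (fun x => aaMaximinScore Cs A v x) t ∧
    IsBest (Cs ∩ A t) (fun x => maximinScore Cs v x) w

/-- `w` is the SW-Maximin winner: all candidates with alliance-aware maximin
score `> n/2` advance to a runoff decided by standard Maximin on the restricted
election; if no candidate advances, the candidate with the highest
alliance-aware maximin score wins. -/
def SWMaximinWinner {C : Type*} [Fintype C] [LinearOrder C] {n : ℕ}
    (Cs : Finset C) (A : C → Finset C) (v : Fin n → C → ℕ) (w : C) : Prop :=
  let T := Cs.filter (fun x => (n : ℕ∞) < 2 * aaMaximinScore Cs A v x)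
  (T.Nonempty ∧ IsBest T (fun x => maximinScore T v x) w) ∨
  (T = ∅ ∧ IsBest Cs (fun x => aaMaximinScore Cs A v x) w)

lemma pref_add {C : Type*} [Fintype C] {n : ℕ} (v : Fin n → C → ℕ)
    (hinj : ∀ i, Function.Injective (v i)) {a b : C} (hab : a ≠ b) :
    Pref v a b + Pref v b a = n := by
  unfold Pref
  have hcongr : Finset.univ.filter (fun i : Fin n => v i b < v i a)
      = Finset.univ.filter (fun i : Fin n => ¬ v i a < v i b) := by
    apply Finset.filter_congr
    intro i _
    have hne : v i a ≠ v i b := fun h => hab (hinj i h)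
    constructor <;> intro h <;> omega
  rw [hcongr, Finset.card_filter_add_card_filter_not, Finset.card_univ, Fintype.card_fin]

lemma exists_isBest {C : Type*} [LinearOrder C] (s : Finset C) (hs : s.Nonempty)
    (g : C → ℕ∞) : ∃ x, IsBest s g x := by
  obtain ⟨m, hm, hmax⟩ := s.exists_max_image g hs
  classical
  set M := s.filter (fun y => g y = g m) with hM
  have hMne : M.Nonempty := ⟨m, Finset.mem_filter.2 ⟨hm, rfl⟩⟩
  refine ⟨M.min' hMne, ?_, ?_, ?_⟩
  · exact (Finset.mem_filter.1 (M.min'_mem hMne)).1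
  · intro y hy
    have := (Finset.mem_filter.1 (M.min'_mem hMne)).2
    rw [this]; exact hmax y hy
  · intro y hy hgy
    have hgm := (Finset.mem_filter.1 (M.min'_mem hMne)).2
    exact M.min'_le y (Finset.mem_filter.2 ⟨hy, hgy.trans hgm⟩)

lemma lt_of_two_mul_lt {a b : ℕ∞} (h : 2 * a < 2 * b) : a < b := by
  by_contra hh; push_neg at hh; exact absurd (mul_le_mul_right hh 2) (not_le.2 h)

/-- If `c` is a Condorcet winner, then `c`'s alliance-aware maximin score
exceeds `n/2` while every opponent's alliance-aware maximin score is less than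
`n/2`; consequently both IW-Maximin and SW-Maximin elect the Condorcet winner. -/
theorem aa_maximin_condorcet {C : Type*} [Fintype C] [LinearOrder C] {n : ℕ}
    (v : Fin n → C → ℕ) (hinj : ∀ i, Function.Injective (v i))
    (Cs : Finset C) (hCs : 2 ≤ Cs.card)
    (A : C → Finset C)
    (hA1 : ∀ x, x ∈ A x) (hA2 : ∀ x y, y ∈ A x → A y = A x)
    (hAsub : ∀ x ∈ Cs, A x ⊆ Cs)
    (c : C) (hc : c ∈ Cs) (htwo : ∃ x ∈ Cs, x ∉ A c)
    (hcond : ∀ b ∈ Cs, b ≠ c → n < 2 * Pref v c b) :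
    (n : ℕ∞) < 2 * aaMaximinScore Cs A v c ∧
    (∀ b ∈ Cs, b ∉ A c → 2 * aaMaximinScore Cs A v b < (n : ℕ∞)) ∧
    IWMaximinWinner Cs A v c ∧ SWMaximinWinner Cs A v c := by
  classical
  -- the Condorcet winner beats everyone, cast version
  have hcondE : ∀ b ∈ Cs, b ≠ c → (n : ℕ∞) < 2 * (Pref v c b : ℕ∞) := by
    intro b hb hbc
    have := hcond b hb hbc
    exact_mod_cast this
  -- losers lose to c
  have hlose : ∀ b ∈ Cs, b ≠ c → 2 * (Pref v b c : ℕ∞) < (n : ℕ∞) := by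
    intro b hb hbc
    have h1 := hcond b hb hbc
    have h2 := pref_add v hinj hbc
    have : 2 * Pref v b c < n := by omega
    exact_mod_cast this
  -- Part 1
  have part1 : (n : ℕ∞) < 2 * aaMaximinScore Cs A v c := by
    obtain ⟨x0, hx0, hx0'⟩ := htwo
    have hne : (Cs \ A c).Nonempty := ⟨x0, Finset.mem_sdiff.2 ⟨hx0, hx0'⟩⟩
    obtain ⟨y, hy, hEq⟩ := Finset.exists_mem_eq_inf (Cs \ A c) hne
      (fun y => (Pref v c y : ℕ∞))
    rw [aaMaximinScore, hEq]
    obtain ⟨hyCs, hyA⟩ := Finset.mem_sdiff.1 hy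
    exact hcondE y hyCs (fun h => hyA (h ▸ hA1 c))
  -- Part 2
  have part2 : ∀ b ∈ Cs, b ∉ A c → 2 * aaMaximinScore Cs A v b < (n : ℕ∞) := by
    intro b hb hbA
    have hbc : b ≠ c := fun h => hbA (h ▸ hA1 c)
    have hcAb : c ∉ A b := by
      intro h
      have := hA2 b c h  -- A c = A b
      exact hbA (this ▸ hA1 b)
    have hcmem : c ∈ Cs \ A b := Finset.mem_sdiff.2 ⟨hc, hcAb⟩
    have hle : aaMaximinScore Cs A v b ≤ (Pref v b c : ℕ∞) :=
      Finset.inf_le hcmem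
    calc 2 * aaMaximinScore Cs A v b ≤ 2 * (Pref v b c : ℕ∞) := mul_le_mul_right hle 2
      _ < (n : ℕ∞) := hlose b hb hbc
  -- standard maximin score of c on Cs is large
  have msc : (n : ℕ∞) < 2 * maximinScore Cs v c := by
    have hne : (Cs.erase c).Nonempty := by
      rw [← Finset.card_pos, Finset.card_erase_of_mem hc]; omega
    obtain ⟨y, hy, hEq⟩ := Finset.exists_mem_eq_inf (Cs.erase c) hne
      (fun y => (Pref v c y : ℕ∞))
    rw [maximinScore, hEq]
    exact hcondE y (Finset.mem_of_mem_erase hy) (Finset.ne_of_mem_erase hy)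
  -- standard maximin score of others on Cs is small
  have msy : ∀ y ∈ Cs, y ≠ c → 2 * maximinScore Cs v y < (n : ℕ∞) := by
    intro y hy hyc
    have hcmem : c ∈ Cs.erase y := Finset.mem_erase.2 ⟨hyc.symm, hc⟩
    have hle : maximinScore Cs v y ≤ (Pref v y c : ℕ∞) := Finset.inf_le hcmem
    calc 2 * maximinScore Cs v y ≤ 2 * (Pref v y c : ℕ∞) := mul_le_mul_right hle 2
      _ < (n : ℕ∞) := hlose y hy hyc
  -- IW winner
  have hIW : IWMaximinWinner Cs A v c := by
    obtain ⟨t, htB⟩ := exists_isBest Cs ⟨c, hc⟩ (fun x => aaMaximinScore Cs A v x)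
    refine ⟨t, htB, ?_, ?_, ?_⟩
    · -- c ∈ Cs ∩ A t
      have htA : t ∈ A c := by
        by_contra htA
        have h1 := part2 t htB.1 htA
        have h2 : (n : ℕ∞) < 2 * aaMaximinScore Cs A v t :=
          lt_of_lt_of_le part1 (mul_le_mul_right (htB.2.1 c hc) 2)
        exact absurd (h1.trans h2) (lt_irrefl _)
      have hAt : A t = A c := hA2 c t htA
      exact Finset.mem_inter.2 ⟨hc, hAt ▸ hA1 c⟩
    · intro y hy
      rcases eq_or_ne y c with rfl | hyc
      · exact le_refl _
      · exact le_of_lt (lt_of_two_mul_lt ((msy y (Finset.mem_inter.1 hy).1 hyc).trans msc))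
    · intro y hy hgy
      rcases eq_or_ne y c with rfl | hyc
      · exact le_refl _
      · exact absurd hgy (ne_of_lt (lt_of_two_mul_lt
          ((msy y (Finset.mem_inter.1 hy).1 hyc).trans msc)))
  -- SW winner
  have hSW : SWMaximinWinner Cs A v c := by
    unfold SWMaximinWinner
    set T := Cs.filter (fun x => (n : ℕ∞) < 2 * aaMaximinScore Cs A v x) with hT
    have hcT : c ∈ T := Finset.mem_filter.2 ⟨hc, part1⟩
    have hTsub : T ⊆ Cs := Finset.filter_subset _ _
    -- maximin score of c on T is large
    have mscT : (n : ℕ∞) < 2 * maximinScore T v c := by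
      by_cases hne : (T.erase c).Nonempty
      · obtain ⟨y, hy, hEq⟩ := Finset.exists_mem_eq_inf (T.erase c) hne
          (fun y => (Pref v c y : ℕ∞))
        rw [maximinScore, hEq]
        exact hcondE y (hTsub (Finset.mem_of_mem_erase hy)) (Finset.ne_of_mem_erase hy)
      · rw [Finset.not_nonempty_iff_eq_empty] at hne
        rw [maximinScore, hne, Finset.inf_empty]
        simp
    have msyT : ∀ y ∈ T, y ≠ c → 2 * maximinScore T v y < (n : ℕ∞) := by
      intro y hy hyc
      have hcmem : c ∈ T.erase y := Finset.mem_erase.2 ⟨hyc.symm, hcT⟩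
      have hle : maximinScore T v y ≤ (Pref v y c : ℕ∞) := Finset.inf_le hcmem
      calc 2 * maximinScore T v y ≤ 2 * (Pref v y c : ℕ∞) := mul_le_mul_right hle 2
        _ < (n : ℕ∞) := hlose y (hTsub hy) hyc
    left
    refine ⟨⟨c, hcT⟩, hcT, ?_, ?_⟩
    · intro y hy
      rcases eq_or_ne y c with rfl | hyc
      · exact le_refl _
      · exact le_of_lt (lt_of_two_mul_lt ((msyT y hy hyc).trans mscT))
    · intro y hy hgy
      rcases eq_or_ne y c with rfl | hyc
      · exact le_refl _
      · exact absurd hgy (ne_of_lt (lt_of_two_mul_lt ((msyT y hy hyc).trans mscT)))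
  exact ⟨part1, part2, hIW, hSW⟩
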